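/- Let R be a commutative ring, M an R-module, N a semimodule over fgId(R), and let w : M → N be a u_R-seminorm with induced additive monoid homomorphism ŵ : fgMod(M) → N determined by ŵ(R·m) = w(m). Then ŵ is a morphism of fgId(R)-semimodules (that is, ŵ(ρ·μ) = ρ·ŵ(μ) for all ρ ∈ fgId(R) and μ ∈ fgMod(M)) if and only if w(r·m) = u_R(r)·w(m) for all r ∈ R and m ∈ M. -/

import Mathlib

def FGIdeal (R : Type*) [CommRing R] : Type _ := {I : Ideal R // I.FG}

namespace FGIdeal

variable {R : Type*} [CommRing R]

instance : Zero (FGIdeal R) := ⟨⟨⊥, Submodule.fg_bot⟩⟩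

instance : One (FGIdeal R) := ⟨⟨1, ⟨{1}, by simp [Ideal.one_eq_top]⟩⟩⟩

instance : Add (FGIdeal R) :=
  ⟨fun I J => ⟨I.1 + J.1, by rw [Submodule.add_eq_sup]; exact Submodule.FG.sup I.2 J.2⟩⟩

instance : Mul (FGIdeal R) := ⟨fun I J => ⟨I.1 * J.1, Submodule.FG.mul I.2 J.2⟩⟩

instance : SMul ℕ (FGIdeal R) :=
  ⟨fun n I => ⟨n • I.1, by
    induction n with
    | zero => simp only [zero_smul, Nat.cast_zero]; exact Submodule.fg_bot
    | succ n ih => rw [succ_nsmul, Submodule.add_eq_sup]; exact Submodule.FG.sup ih I.2⟩⟩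

instance : Pow (FGIdeal R) ℕ := ⟨fun I n => ⟨I.1 ^ n, Submodule.FG.pow I.2 n⟩⟩

instance : NatCast (FGIdeal R) :=
  ⟨fun n => ⟨(n : Ideal R), by
    induction n with
    | zero => simp only [zero_smul, Nat.cast_zero]; exact Submodule.fg_bot
    | succ n ih =>
        rw [Nat.cast_succ, Submodule.add_eq_sup]
        exact Submodule.FG.sup ih ⟨{1}, by simp [Ideal.one_eq_top]⟩⟩⟩

instance : CommSemiring (FGIdeal R) :=
  Subtype.val_injective.commSemiring (fun I : FGIdeal R => I.1) rfl rfl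
    (fun _ _ => rfl) (fun _ _ => rfl) (fun _ _ => rfl) (fun _ _ => rfl) (fun _ => rfl)

end FGIdeal

/-- The universal integral seminorm `u_R : R → fgId(R)`, `a ↦ R·a`. -/
def uRfg {R : Type*} [CommRing R] (a : R) : FGIdeal R := ⟨Ideal.span {a}, Submodule.fg_span_singleton a⟩

/-- The type of finitely generated `R`-submodules of `M`. -/
def FGSubmodule (R M : Type*) [CommRing R] [AddCommGroup M] [Module R M] : Type _ :=
  {N : Submodule R M // N.FG}

namespace FGSubmodule

variable {R M : Type*} [CommRing R] [AddCommGroup M] [Module R M]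

instance : Zero (FGSubmodule R M) := ⟨⟨⊥, Submodule.fg_bot⟩⟩

instance : Add (FGSubmodule R M) := ⟨fun A B => ⟨A.1 ⊔ B.1, Submodule.FG.sup A.2 B.2⟩⟩

instance : AddCommMonoid (FGSubmodule R M) where
  add_assoc A B C := Subtype.ext (sup_assoc _ _ _)
  zero_add A := Subtype.ext (bot_sup_eq _)
  add_zero A := Subtype.ext (sup_bot_eq _)
  add_comm A B := Subtype.ext (sup_comm _ _)
  nsmul := nsmulRec

/-- The action of `fgId(R)` on `fgMod(M)`, `(I, N) ↦ I • N`. -/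
instance : SMul (FGIdeal R) (FGSubmodule R M) :=
  ⟨fun ρ ν => ⟨ρ.1 • ν.1, by
    rw [Submodule.smul_eq_map₂]; exact Submodule.FG.map₂ _ ρ.2 ν.2⟩⟩

end FGSubmodule

/-- The universal `u_R`-norm `u_M : M → fgMod(M)`, `m ↦ R·m`. -/
def uMfg {R M : Type*} [CommRing R] [AddCommGroup M] [Module R M] (m : M) : FGSubmodule R M :=
  ⟨Submodule.span R {m}, Submodule.fg_span_singleton m⟩

/-- A `u_R`-seminorm on an `R`-module `M` with values in an `fgId(R)`-semimodule `N`: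
`w 0 = 0`, `w (m + m') ≤ w m + w m'`, and `w (r • m) ≤ C u_R(r) • w m` for some fixed
nonzero `C ∈ fgId(R)`. Inequalities are expressed through the canonical order
`x ≤ y` iff `x + y = y`. -/
def IsURSeminorm {R M N : Type*} [CommRing R] [AddCommGroup M] [Module R M]
    [AddCommMonoid N] [Module (FGIdeal R) N] (w : M → N) : Prop :=
  w 0 = 0 ∧
    (∀ m m' : M, w (m + m') + (w m + w m') = w m + w m') ∧
    ∃ C : FGIdeal R, C ≠ 0 ∧
      ∀ (r : R) (m : M), w (r • m) + (C * uRfg r) • w m = (C * uRfg r) • w m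

/- Both sides of `what (ρ • μ) = ρ • what μ` are additive in `ρ` and in `μ`, and `fgId(R)`, `fgMod(M)` are
additively generated by the principal `u_R r`, `u_M m`; on generators the identity reads
`w (r • m) = u_R r • w m`, because `u_R r • u_M m = u_M (r • m)`. -/

theorem FGIdeal.induction_on {R : Type*} [CommRing R] {motive : FGIdeal R → Prop}
    (ρ : FGIdeal R) (span : ∀ r, motive (uRfg r))
    (add : ∀ ρ σ, motive ρ → motive σ → motive (ρ + σ)) : motive ρ :=
  Submodule.fg_induction (motive := fun I hI => motive ⟨I, hI⟩) span
    (fun _ _ _ _ => add _ _) ρ.1 ρ.2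

namespace FGSubmodule

variable {R M : Type*} [CommRing R] [AddCommGroup M] [Module R M]

theorem induction_on {motive : FGSubmodule R M → Prop}
    (μ : FGSubmodule R M) (span : ∀ m, motive (uMfg m))
    (add : ∀ μ ν, motive μ → motive ν → motive (μ + ν)) : motive μ :=
  Submodule.fg_induction (motive := fun N hN => motive ⟨N, hN⟩) span
    (fun _ _ _ _ => add _ _) μ.1 μ.2

theorem smul_add (ρ : FGIdeal R) (μ ν : FGSubmodule R M) :
    ρ • (μ + ν) = ρ • μ + ρ • ν :=
  Subtype.ext (Submodule.smul_sup ..)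

theorem add_smul (ρ σ : FGIdeal R) (μ : FGSubmodule R M) :
    (ρ + σ) • μ = ρ • μ + σ • μ :=
  Subtype.ext (Submodule.sup_smul ..)

end FGSubmodule

theorem uRfg_smul_uMfg {R M : Type*} [CommRing R] [AddCommGroup M] [Module R M] (r : R) (m : M) :
    uRfg r • uMfg m = uMfg (R := R) (r • m) :=
  Subtype.ext <| (Submodule.span_smul_span _ _).trans (by simp [uMfg])

theorem induced_hom_is_semimodule_hom_iff_general
    (R M N : Type*) [CommRing R] [AddCommGroup M] [Module R M]
    [AddCommMonoid N] [Module (FGIdeal R) N]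
    (w : M → N)
    (what : FGSubmodule R M →+ N) (hfac : ∀ m : M, what (uMfg m) = w m) :
    (∀ (ρ : FGIdeal R) (μ : FGSubmodule R M), what (ρ • μ) = ρ • what μ) ↔
      (∀ (r : R) (m : M), w (r • m) = uRfg r • w m) := by
  refine ⟨fun H r m => by rw [← hfac, ← uRfg_smul_uMfg, H, hfac], fun h ρ μ => ?_⟩
  induction μ using FGSubmodule.induction_on with
  | span m =>
    induction ρ using FGIdeal.induction_on with
    | span r => rw [uRfg_smul_uMfg, hfac, hfac, h]
    | add ρ σ hρ hσ => rw [FGSubmodule.add_smul, map_add, hρ, hσ, add_smul]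
  | add μ ν hμ hν => rw [FGSubmodule.smul_add, map_add, map_add, hμ, hν, smul_add]

/-- The induced additive monoid homomorphism `ŵ : fgMod(M) → N` of a
`u_R`-seminorm `w` (determined by `ŵ (R·m) = w m`) is a morphism of
`fgId(R)`-semimodules, i.e. `ŵ (ρ • μ) = ρ • ŵ μ` for all `ρ`, `μ`, if and only if
`w (r • m) = u_R(r) • w m` for all `r ∈ R` and `m ∈ M`. -/
theorem induced_hom_is_semimodule_hom_iff
    (R M N : Type*) [CommRing R] [AddCommGroup M] [Module R M]
    [AddCommMonoid N] [Module (FGIdeal R) N]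
    (w : M → N) (hw : IsURSeminorm (R := R) w)
    (what : FGSubmodule R M →+ N) (hfac : ∀ m : M, what (uMfg m) = w m) :
    (∀ (ρ : FGIdeal R) (μ : FGSubmodule R M), what (ρ • μ) = ρ • what μ) ↔
      (∀ (r : R) (m : M), w (r • m) = uRfg r • w m) :=
  induced_hom_is_semimodule_hom_iff_general R M N w what hfac
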